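/- arXiv:2406.15952 — 3 statements merged into one kernel-verified Lean document; each statement's English description precedes it below -/
import Mathlib

section
/- Let E be a finite set with k elements, and let (P_n)_{n≥1} be a sequence of k×k row-stochastic matrices such that for any 0 ≤ n1 < n2, the product P_{n1+1}·P_{n1+2}⋯P_{n2} is an irreducible matrix. Then for N = 2^k − 2, every entry of the product P_1·P_2⋯P_N is strictly positive. -/
/-- A nonnegative square matrix is irreducible: for every pair of indices there is
an `m ≥ 1` such that the `(i,j)` entry of the `m`-th power is positive. -/
def MatIrreducible {k : ℕ} (M : Matrix (Fin k) (Fin k) ℝ) : Prop :=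
  ∀ i j : Fin k, ∃ m : ℕ, 1 ≤ m ∧ 0 < (M ^ m) i j

/-- A matrix is row-stochastic. -/
def RowStochastic {k : ℕ} (M : Matrix (Fin k) (Fin k) ℝ) : Prop :=
  (∀ i j, 0 ≤ M i j) ∧ (∀ i, ∑ j, M i j = 1)

/-- Product `P_{n1+1} ⋯ P_{n2}` of the matrices. -/
def matProd {k : ℕ} (P : ℕ → Matrix (Fin k) (Fin k) ℝ) (n1 n2 : ℕ) :
    Matrix (Fin k) (Fin k) ℝ :=
  ((List.range (n2 - n1)).map (fun i => P (n1 + 1 + i))).prod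

/-!
Let `S n` be the support of row `i` of `P₁ ⋯ Pₙ`, the states reachable from `i` in `n` steps.
Products of stochastic matrices are stochastic, so `S n` is never empty. If `S a = S b` for
some `a < b`, then `S a` is closed under the positive entries of the irreducible matrix
`P_{a+1} ⋯ P_b`, hence is everything; and a full `S n` stays full, because irreducibility of
`P_{n+1}` alone gives each of its columns a positive entry. Among `S 0, …, S N` with
`N = 2 ^ k - 2`, pigeonhole over the `2 ^ k - 2` nonempty proper subsets of the states makes one
of them full or two of them equal.
-/

open Finset Matrix

namespace Matrix

variable {ι R : Type*} [Fintype ι] [Semiring R] [LinearOrder R]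

def rowSupport (M : Matrix ι ι R) (i : ι) : Finset ι := {j | 0 < M i j}

@[simp]
lemma mem_rowSupport {M : Matrix ι ι R} {i j : ι} : j ∈ rowSupport M i ↔ 0 < M i j := by
  simp [rowSupport]

variable [IsStrictOrderedRing R]

lemma mul_apply_pos_iff {M N : Matrix ι ι R} (hM : ∀ i j, 0 ≤ M i j) (hN : ∀ i j, 0 ≤ N i j)
    (i j : ι) : 0 < (M * N) i j ↔ ∃ l, 0 < M i l ∧ 0 < N l j := by
  rw [mul_apply, Finset.sum_pos_iff_of_nonneg fun l _ => mul_nonneg (hM i l) (hN l j)]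
  refine exists_congr fun l => ⟨fun ⟨_, h⟩ => ⟨?_, ?_⟩, fun ⟨h₁, h₂⟩ => ⟨mem_univ l, mul_pos h₁ h₂⟩⟩
  · exact (hM i l).lt_of_ne fun h₀ => by simp [← h₀] at h
  · exact (hN l j).lt_of_ne fun h₀ => by simp [← h₀] at h

lemma mem_rowSupport_mul {M N : Matrix ι ι R} (hM : ∀ i j, 0 ≤ M i j) (hN : ∀ i j, 0 ≤ N i j)
    {i j : ι} : j ∈ rowSupport (M * N) i ↔ ∃ l ∈ rowSupport M i, 0 < N l j := by
  simp only [mem_rowSupport, mul_apply_pos_iff hM hN]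

lemma rowSupport_mul_eq_univ {M N : Matrix ι ι R} (hM : ∀ i j, 0 ≤ M i j)
    (hN : ∀ i j, 0 ≤ N i j) (hcol : ∀ j, ∃ l, 0 < N l j) {i : ι} (hfull : rowSupport M i = univ) :
    rowSupport (M * N) i = univ :=
  eq_univ_of_forall fun j =>
    (hcol j).elim fun l hl => (mem_rowSupport_mul hM hN).2 ⟨l, hfull ▸ mem_univ l, hl⟩

variable [DecidableEq ι]

lemma rowSupport_nonempty_of_mem_rowStochastic {M : Matrix ι ι R} (hM : M ∈ rowStochastic R ι)
    (i : ι) : (rowSupport M i).Nonempty := by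
  have hsum : ∑ _j : ι, (0 : R) < ∑ j, M i j := by
    simp [sum_row_of_mem_rowStochastic hM i]
  obtain ⟨j, -, hj⟩ := Finset.exists_lt_of_sum_lt hsum
  exact ⟨j, mem_rowSupport.2 hj⟩

lemma exists_apply_pos_of_pow_succ_apply_pos {M : Matrix ι ι R} (hM : ∀ i j, 0 ≤ M i j)
    {m : ℕ} {i j : ι} (h : 0 < (M ^ (m + 1)) i j) : ∃ l, 0 < M l j := by
  rw [pow_succ, mul_apply_pos_iff (pow_apply_nonneg hM m) hM] at h
  obtain ⟨l, -, hl⟩ := h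
  exact ⟨l, hl⟩

lemma eq_univ_of_forall_apply_pos_mem {M : Matrix ι ι R} (hM : ∀ i j, 0 ≤ M i j)
    (hirr : ∀ i j, ∃ m : ℕ, 0 < (M ^ m) i j) {s : Finset ι} (hs : s.Nonempty)
    (hclosed : ∀ l ∈ s, ∀ j, 0 < M l j → j ∈ s) : s = univ := by
  have hpow : ∀ m : ℕ, ∀ l ∈ s, ∀ j, 0 < (M ^ m) l j → j ∈ s := by
    intro m
    induction m with
    | zero =>
      intro l hl j hj
      rcases eq_or_ne l j with rfl | hne
      · exact hl
      · simp [one_apply_ne hne] at hj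
    | succ m ih =>
      intro l hl j hj
      rw [pow_succ, mul_apply_pos_iff (pow_apply_nonneg hM m) hM] at hj
      obtain ⟨x, hlx, hxj⟩ := hj
      exact hclosed x (ih l hl x hlx) j hxj
  obtain ⟨l, hl⟩ := hs
  exact eq_univ_of_forall fun j => (hirr l j).elim fun m hm => hpow m l hl j hm

lemma rowSupport_eq_univ_of_rowSupport_mul_eq {M Q : Matrix ι ι R} (hM : ∀ i j, 0 ≤ M i j)
    (hQ : ∀ i j, 0 ≤ Q i j) (hirr : ∀ i j, ∃ m : ℕ, 0 < (Q ^ m) i j) {i : ι}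
    (hne : (rowSupport M i).Nonempty) (heq : rowSupport (M * Q) i = rowSupport M i) :
    rowSupport M i = univ :=
  eq_univ_of_forall_apply_pos_mem hQ hirr hne fun l hl _ hj =>
    heq ▸ (mem_rowSupport_mul hM hQ).2 ⟨l, hl, hj⟩

end Matrix

lemma Finset.exists_le_eq_univ_of_eq_imp_eq_univ {ι : Type*} [Fintype ι] [DecidableEq ι]
    (S : ℕ → Finset ι) (hne : ∀ n, (S n).Nonempty)
    (hrep : ∀ a b, a < b → S a = S b → S a = univ) :
    ∃ n ≤ 2 ^ Fintype.card ι - 2, S n = univ := by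
  by_contra! hproper
  have hι : (∅ : Finset ι) ≠ univ := by
    obtain ⟨x, -⟩ := hne 0
    exact fun h => notMem_empty x (h ▸ mem_univ x)
  have hcard : #(univ \ {∅, univ} : Finset (Finset ι)) = 2 ^ Fintype.card ι - 2 := by
    rw [card_univ_sdiff, card_pair hι, Fintype.card_finset]
  have hmaps : ∀ n ∈ range (2 ^ Fintype.card ι - 2 + 1), S n ∈ (univ \ {∅, univ} : Finset _) := by
    intro n hn
    simp only [mem_sdiff, mem_univ, mem_insert, mem_singleton, true_and, not_or]
    exact ⟨(hne n).ne_empty, hproper n (by simp at hn; omega)⟩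
  obtain ⟨a, ha, b, hb, hab, hSab⟩ :=
    exists_ne_map_eq_of_card_lt_of_maps_to (by simp [hcard]) hmaps
  simp only [mem_range] at ha hb
  rcases hab.lt_or_gt with h | h
  · exact hproper a (by omega) (hrep a b h hSab)
  · exact hproper b (by omega) (hrep b a h hSab.symm)

section Products

variable {k : ℕ}

lemma MatIrreducible.exists_pow_apply_pos {M : Matrix (Fin k) (Fin k) ℝ} (h : MatIrreducible M)
    (i j : Fin k) : ∃ m : ℕ, 0 < (M ^ m) i j :=
  (h i j).imp fun _ hm => hm.2

lemma MatIrreducible.exists_apply_pos {M : Matrix (Fin k) (Fin k) ℝ} (h : MatIrreducible M)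
    (hM : ∀ i j, 0 ≤ M i j) (j : Fin k) : ∃ l, 0 < M l j := by
  obtain ⟨m, hm, hpos⟩ := h j j
  obtain ⟨m, rfl⟩ := Nat.exists_eq_add_of_le' hm
  exact exists_apply_pos_of_pow_succ_apply_pos hM hpos

variable (P : ℕ → Matrix (Fin k) (Fin k) ℝ)

lemma matProd_self (n : ℕ) : matProd P n n = 1 := by
  simp [matProd]

lemma matProd_succ {a b : ℕ} (hab : a ≤ b) : matProd P a (b + 1) = matProd P a b * P (b + 1) := by
  rw [matProd, matProd, Nat.sub_add_comm hab, List.range_succ, List.map_append, List.prod_append]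
  simp [Nat.add_right_comm a 1, Nat.add_sub_cancel' hab]

lemma matProd_mul {a b c : ℕ} (hab : a ≤ b) (hbc : b ≤ c) :
    matProd P a b * matProd P b c = matProd P a c := by
  induction c, hbc using Nat.le_induction with
  | base => rw [matProd_self, mul_one]
  | succ c hbc ih => rw [matProd_succ P hbc, matProd_succ P (hab.trans hbc), ← ih, mul_assoc]

lemma matProd_mem_rowStochastic {P : ℕ → Matrix (Fin k) (Fin k) ℝ}
    (hP : ∀ n, 1 ≤ n → RowStochastic (P n)) (a b : ℕ) :
    matProd P a b ∈ rowStochastic ℝ (Fin k) := by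
  refine Submonoid.list_prod_mem _ fun M hM => ?_
  obtain ⟨n, -, rfl⟩ := List.mem_map.1 hM
  exact mem_rowStochastic_iff_sum.2 (hP _ (by omega))

end Products

theorem strong_primitivity_bound {k : ℕ}
    (P : ℕ → Matrix (Fin k) (Fin k) ℝ)
    (hstoch : ∀ n, 1 ≤ n → RowStochastic (P n))
    (hirr : ∀ n1 n2 : ℕ, n1 < n2 → MatIrreducible (matProd P n1 n2)) :
    ∀ i j : Fin k, 0 < matProd P 0 (2 ^ k - 2) i j := by
  intro i j
  have hmem : ∀ a b, matProd P a b ∈ rowStochastic ℝ (Fin k) := matProd_mem_rowStochastic hstoch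
  have hnonneg : ∀ a b, ∀ x y, 0 ≤ matProd P a b x y := fun a b => (hmem a b).1
  set S : ℕ → Finset (Fin k) := fun n => rowSupport (matProd P 0 n) i
  have hrep : ∀ a b, a < b → S a = S b → S a = univ := fun a b hab heq =>
    rowSupport_eq_univ_of_rowSupport_mul_eq (hnonneg 0 a) (hnonneg a b)
      (hirr a b hab).exists_pow_apply_pos (rowSupport_nonempty_of_mem_rowStochastic (hmem 0 a) i)
      (by rw [matProd_mul P a.zero_le hab.le]; exact heq.symm)
  have hgrow : ∀ n, S n = univ → S (n + 1) = univ := fun n hn => by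
    simp only [S, ← matProd_mul P n.zero_le n.le_succ]
    exact rowSupport_mul_eq_univ (hnonneg 0 n) (hnonneg n (n + 1))
      ((hirr n (n + 1) n.lt_succ_self).exists_apply_pos (hnonneg n (n + 1))) hn
  obtain ⟨n, hn, hSn⟩ := exists_le_eq_univ_of_eq_imp_eq_univ S
    (fun n => rowSupport_nonempty_of_mem_rowStochastic (hmem 0 n) i) hrep
  rw [Fintype.card_fin] at hn
  have hfull : S (2 ^ k - 2) = univ := Nat.le_induction hSn (fun m _ => hgrow m) _ hn
  have hj : j ∈ S (2 ^ k - 2) := hfull ▸ mem_univ j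
  exact mem_rowSupport.1 hj
end

section
/- Let Z be a bounded random variable on a probability space (Ω, F, P) and fix γ < 0. Then (1/γ) ln E[exp(γZ)] = inf over probability measures Q absolutely continuous with respect to P of { E_Q[Z] − (1/γ) H(Q ‖ P) }, where H(Q ‖ P) = E_Q[ln(dQ/dP)] is the relative entropy. -/
/-!
With `f = γ Z` the claim is `1/γ` times the Donsker–Varadhan formula
`log ∑ P e^f = max_Q (E_Q f - H(Q ‖ P))`; the sign flips because `γ < 0`.
The maximum is attained at the Gibbs measure `G ∝ P e^f`: for `Q ≪ P`,
`H(Q ‖ G) = H(Q ‖ P) - E_Q f + log ∑ P e^f`, and Gibbs' inequality `H(Q ‖ G) ≥ 0`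
(a sum of the pointwise bounds `q log (q / p) ≥ q - p`, i.e. `log x ≤ x - 1`) gives the bound,
with equality at `Q = G`.
-/

open Real Finset

theorem sub_le_mul_log_div {p q : ℝ} (hp : 0 ≤ p) (hq : 0 ≤ q) (hpq : p = 0 → q = 0) :
    q - p ≤ q * log (q / p) := by
  rcases hq.eq_or_lt with rfl | hq
  · simpa using hp
  have hp : 0 < p := hp.lt_of_ne fun h => hq.ne' (hpq h.symm)
  have : q * log (p / q) ≤ p - q :=
    calc q * log (p / q) ≤ q * (p / q - 1) := by gcongr; exact log_le_sub_one_of_pos (by positivity)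
      _ = p - q := by field_simp
  rw [← inv_div, log_inv]
  linarith

section

variable {ι : Type*} [Fintype ι]

theorem sum_mul_log_div_nonneg {p q : ι → ℝ} (hp : ∀ i, 0 ≤ p i) (hq : ∀ i, 0 ≤ q i)
    (hpq : ∀ i, p i = 0 → q i = 0) (hsum : ∑ i, q i = ∑ i, p i) :
    0 ≤ ∑ i, q i * log (q i / p i) :=
  calc 0 = ∑ i, (q i - p i) := by rw [sum_sub_distrib, hsum, sub_self]
    _ ≤ _ := sum_le_sum fun i _ => sub_le_mul_log_div (hp i) (hq i) (hpq i)

noncomputable def gibbs (P f : ι → ℝ) (i : ι) : ℝ :=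
  P i * exp (f i) / ∑ j, P j * exp (f j)

variable {P : ι → ℝ} (f : ι → ℝ)

theorem sum_mul_exp_pos (hP : ∀ i, 0 ≤ P i) {i : ι} (hi : 0 < P i) :
    0 < ∑ j, P j * exp (f j) :=
  lt_of_lt_of_le (mul_pos hi (exp_pos _))
    (single_le_sum (fun j _ => mul_nonneg (hP j) (exp_pos _).le) (mem_univ i))

theorem gibbs_nonneg (hP : ∀ i, 0 ≤ P i) (i : ι) : 0 ≤ gibbs P f i :=
  div_nonneg (mul_nonneg (hP i) (exp_pos _).le)
    (sum_nonneg fun j _ => mul_nonneg (hP j) (exp_pos _).le)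

theorem gibbs_pos (hP : ∀ i, 0 ≤ P i) {i : ι} (hi : 0 < P i) : 0 < gibbs P f i :=
  div_pos (mul_pos hi (exp_pos _)) (sum_mul_exp_pos f hP hi)

theorem gibbs_eq_zero {i : ι} (hi : P i = 0) : gibbs P f i = 0 := by
  simp [gibbs, hi]

theorem sum_gibbs (hP : ∀ i, 0 ≤ P i) {i : ι} (hi : 0 < P i) : ∑ j, gibbs P f j = 1 := by
  simp only [gibbs]
  rw [← sum_div, div_self (sum_mul_exp_pos f hP hi).ne']

theorem log_gibbs_div (hP : ∀ i, 0 ≤ P i) {i : ι} (hi : 0 < P i) :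
    log (gibbs P f i / P i) = f i - log (∑ j, P j * exp (f j)) := by
  have hC := (sum_mul_exp_pos f hP hi).ne'
  have : gibbs P f i / P i = exp (f i) / ∑ j, P j * exp (f j) := by
    unfold gibbs; field_simp
  rw [this, log_div (exp_pos _).ne' hC, log_exp]

theorem gibbs_mul_log_gibbs_div (hP : ∀ i, 0 ≤ P i) (i : ι) :
    gibbs P f i * log (gibbs P f i / P i) =
      gibbs P f i * (f i - log (∑ j, P j * exp (f j))) := by
  rcases (hP i).eq_or_lt with hi | hi
  · simp [gibbs_eq_zero f hi.symm]
  · rw [log_gibbs_div f hP hi]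

theorem mul_log_div_gibbs {Q : ι → ℝ} (hP : ∀ i, 0 ≤ P i) (hQP : ∀ i, P i = 0 → Q i = 0)
    (i : ι) : Q i * log (Q i / gibbs P f i) =
      Q i * log (Q i / P i) - Q i * (f i - log (∑ j, P j * exp (f j))) := by
  rcases eq_or_ne (Q i) 0 with hQ | hQ
  · simp [hQ]
  have hi : 0 < P i := (hP i).lt_of_ne fun h => hQ (hQP i h.symm)
  have hG : gibbs P f i / P i ≠ 0 := (div_pos (gibbs_pos f hP hi) hi).ne'
  rw [← log_gibbs_div f hP hi, ← mul_sub, ← log_div (div_ne_zero hQ hi.ne') hG,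
    div_div_div_cancel_right₀ hi.ne']

theorem sum_mul_sub_sum_gibbs_mul_log_gibbs_div (hP : ∀ i, 0 ≤ P i) {i : ι} (hi : 0 < P i) :
    ∑ j, gibbs P f j * f j - ∑ j, gibbs P f j * log (gibbs P f j / P j) =
      log (∑ j, P j * exp (f j)) := by
  simp_rw [gibbs_mul_log_gibbs_div f hP, mul_sub, sum_sub_distrib, ← sum_mul, sum_gibbs f hP hi]
  ring

theorem sum_mul_sub_sum_mul_log_div_le {Q : ι → ℝ} (hP : ∀ i, 0 ≤ P i) (hQ0 : ∀ i, 0 ≤ Q i)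
    (hQ1 : ∑ i, Q i = 1) (hQP : ∀ i, P i = 0 → Q i = 0) :
    ∑ i, Q i * f i - ∑ i, Q i * log (Q i / P i) ≤ log (∑ j, P j * exp (f j)) := by
  obtain ⟨i, -, hQi⟩ := exists_ne_zero_of_sum_ne_zero (hQ1.trans_ne one_ne_zero)
  have hi : 0 < P i := (hP i).lt_of_ne fun h => hQi (hQP i h.symm)
  have hQG : ∀ j, gibbs P f j = 0 → Q j = 0 := fun j hG => hQP j <| by
    by_contra hPj
    exact (gibbs_pos f hP ((hP j).lt_of_ne' hPj)).ne' hG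
  have gibbs_ineq := sum_mul_log_div_nonneg (gibbs_nonneg f hP) hQ0 hQG
    (hQ1.trans (sum_gibbs f hP hi).symm)
  simp_rw [mul_log_div_gibbs f hP hQP, mul_sub, sum_sub_distrib, ← sum_mul, hQ1] at gibbs_ineq
  linarith

end

/-- Dual (Donsker–Varadhan) representation of the entropic utility on a finite
probability space, for a negative risk-sensitivity parameter. -/
theorem entropic_dual_representation
    {Ω : Type*} [Fintype Ω]
    (P : Ω → ℝ) (hP0 : ∀ ω, 0 ≤ P ω) (hP1 : ∑ ω, P ω = 1)
    (Z : Ω → ℝ) (γ : ℝ) (hγ : γ < 0) :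
    (1 / γ) * Real.log (∑ ω, P ω * Real.exp (γ * Z ω)) =
      sInf { r : ℝ | ∃ Q : Ω → ℝ,
        (∀ ω, 0 ≤ Q ω) ∧ (∑ ω, Q ω = 1) ∧ (∀ ω, P ω = 0 → Q ω = 0) ∧
        r = (∑ ω, Q ω * Z ω) -
              (1 / γ) * ∑ ω, Q ω * Real.log (Q ω / P ω) } := by
  obtain ⟨ω₀, -, hω₀⟩ := exists_ne_zero_of_sum_ne_zero (hP1.trans_ne one_ne_zero)
  have hPω₀ : 0 < P ω₀ := (hP0 ω₀).lt_of_ne' hω₀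
  have objective_eq : ∀ Q : Ω → ℝ, (∑ ω, Q ω * Z ω) - (1 / γ) * ∑ ω, Q ω * log (Q ω / P ω) =
      (1 / γ) * (∑ ω, Q ω * (γ * Z ω) - ∑ ω, Q ω * log (Q ω / P ω)) := fun Q => by
    simp_rw [mul_left_comm _ γ, ← mul_sum]
    field_simp [hγ.ne]
  refine (IsLeast.csInf_eq ⟨?_, ?_⟩).symm
  · refine ⟨gibbs P (fun ω => γ * Z ω), gibbs_nonneg _ hP0, sum_gibbs _ hP0 hPω₀,
      fun ω => gibbs_eq_zero _, ?_⟩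
    rw [objective_eq, sum_mul_sub_sum_gibbs_mul_log_gibbs_div _ hP0 hPω₀]
  · rintro r ⟨Q, hQ0, hQ1, hQP, rfl⟩
    rw [objective_eq]
    exact mul_le_mul_of_nonpos_left
      (sum_mul_sub_sum_mul_log_div_le (fun ω => γ * Z ω) hP0 hQ0 hQ1 hQP) (by simp [hγ.le])
end

section
/- Let E be a finite set and define the span seminorm ‖g‖_sp = (1/2)(max_x g(x) − min_x g(x)) for g : E → ℝ. Let T be a map on functions E → ℝ such that for some Λ ∈ (0,1), ‖T g1 − T g2‖_sp ≤ Λ ‖g1 − g2‖_sp for all g1, g2, and T(g + c·1) = T(g) + c·1 for constants c. Suppose (g_n)_{n∈ℕ} is a sequence with g_n = T g_{n+1} + λ_n·1 for constants λ_n, and sup_n ‖g_n‖_sp < ∞, and g_n(z̄) = 0 for a fixed z̄ ∈ E and all n. If w is the unique (up to additive constant) span-fixed point of T normalized by w(z̄) = 0, then g_n = w for all n and the λ_n are all equal. -/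
/-!
Put `d n = ‖g n - w‖_sp`. Since `T w - w` is constant and the span ignores constants, the
recursion gives `d n ≤ Λ d (n + 1)`; as `d` is bounded, its supremum `S` satisfies `S ≤ Λ S`,
so `d = 0`. Thus each `g n - w` is constant, and the normalization at `zbar` makes it zero.
-/

variable {E : Type*} [Fintype E] [Nonempty E]

/-- The span seminorm on functions `E → ℝ`. -/
noncomputable def spanNorm (g : E → ℝ) : ℝ :=
  (1 / 2) * (Finset.univ.sup' Finset.univ_nonempty g -
    Finset.univ.inf' Finset.univ_nonempty g)

open Finset

lemma eq_zero_of_le_mul_succ_of_bddAbove {s : ℕ → ℝ} {Λ : ℝ} (hΛ0 : 0 ≤ Λ) (hΛ1 : Λ < 1)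
    (hs0 : ∀ n, 0 ≤ s n) (hbdd : BddAbove (Set.range s)) (hs : ∀ n, s n ≤ Λ * s (n + 1))
    (n : ℕ) : s n = 0 := by
  have hS : ⨆ k, s k ≤ Λ * ⨆ k, s k :=
    ciSup_le fun k => (hs k).trans (mul_le_mul_of_nonneg_left (le_ciSup hbdd _) hΛ0)
  have hS0 : 0 ≤ ⨆ k, s k := (hs0 0).trans (le_ciSup hbdd 0)
  have hSn : s n ≤ ⨆ k, s k := le_ciSup hbdd n
  nlinarith [hs0 n]

lemma spanNorm_nonneg (g : E → ℝ) : 0 ≤ spanNorm g := by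
  have hx := mem_univ (Classical.arbitrary E)
  have := (inf'_le g hx).trans (le_sup' g hx)
  unfold spanNorm
  linarith

lemma spanNorm_add_const (g : E → ℝ) (c : ℝ) : spanNorm (fun x => g x + c) = spanNorm g := by
  have hinf := map_finset_inf' (OrderIso.addRight c) univ_nonempty g
  simp only [OrderIso.addRight_apply, Function.comp_def] at hinf
  unfold spanNorm
  rw [← sup'_add, ← hinf]
  ring

lemma spanNorm_sub_le (f g : E → ℝ) :
    spanNorm (fun x => f x - g x) ≤ spanNorm f + spanNorm g := by
  have hsup : univ.sup' univ_nonempty (fun x => f x - g x) ≤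
      univ.sup' univ_nonempty f - univ.inf' univ_nonempty g :=
    sup'_le _ _ fun x hx => sub_le_sub (le_sup' f hx) (inf'_le g hx)
  have hinf : univ.inf' univ_nonempty f - univ.sup' univ_nonempty g ≤
      univ.inf' univ_nonempty (fun x => f x - g x) :=
    le_inf' _ _ fun x hx => sub_le_sub (inf'_le f hx) (le_sup' g hx)
  unfold spanNorm
  linarith

lemma exists_eq_const_of_spanNorm_eq_zero {g : E → ℝ} (h : spanNorm g = 0) :
    ∃ c, ∀ x, g x = c := by
  refine ⟨univ.sup' univ_nonempty g, fun x => le_antisymm (le_sup' g (mem_univ x)) ?_⟩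
  have := inf'_le g (mem_univ x)
  unfold spanNorm at h
  linarith

lemma spanNorm_sub_le_of_eq_apply_add {T : (E → ℝ) → (E → ℝ)} {Λ : ℝ}
    (hcontr : ∀ g1 g2 : E → ℝ,
      spanNorm (fun x => T g1 x - T g2 x) ≤ Λ * spanNorm (fun x => g1 x - g2 x))
    {w : E → ℝ} (hw : spanNorm (fun x => T w x - w x) = 0)
    {u v : E → ℝ} {l : ℝ} (huv : u = fun x => T v x + l) :
    spanNorm (fun x => u x - w x) ≤ Λ * spanNorm (fun x => v x - w x) := by
  obtain ⟨c, hc⟩ := exists_eq_const_of_spanNorm_eq_zero hw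
  have hsplit : (fun x => u x - w x) = fun x => (T v x - T w x) + (l + c) := by
    funext x
    rw [huv]
    linarith [hc x]
  rw [hsplit, spanNorm_add_const]
  exact hcontr v w

theorem backward_sequence_is_fixed_point_general
    (T : (E → ℝ) → (E → ℝ)) (Λ : ℝ) (hΛ : Λ ∈ Set.Ioo (0 : ℝ) 1)
    (hcontr : ∀ g1 g2 : E → ℝ,
      spanNorm (fun x => T g1 x - T g2 x) ≤ Λ * spanNorm (fun x => g1 x - g2 x))
    (g : ℕ → E → ℝ) (lam : ℕ → ℝ)
    (hrec : ∀ n, g n = fun x => T (g (n + 1)) x + lam n)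
    (hbound : ∃ B : ℝ, ∀ n, spanNorm (g n) ≤ B)
    (zbar : E) (hnorm : ∀ n, g n zbar = 0)
    (w : E → ℝ) (hw : spanNorm (fun x => T w x - w x) = 0) (hwz : w zbar = 0) :
    (∀ n, g n = w) ∧ (∀ n m, lam n = lam m) := by
  obtain ⟨B, hB⟩ := hbound
  have hbdd : BddAbove (Set.range fun n => spanNorm (fun x => g n x - w x)) :=
    ⟨B + spanNorm w, by
      rintro _ ⟨n, rfl⟩
      linarith [spanNorm_sub_le (g n) w, hB n]⟩
  have hdist : ∀ n, spanNorm (fun x => g n x - w x) = 0 :=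
    eq_zero_of_le_mul_succ_of_bddAbove hΛ.1.le hΛ.2 (fun n => spanNorm_nonneg _) hbdd
      fun n => spanNorm_sub_le_of_eq_apply_add hcontr hw (hrec n)
  have hgw : ∀ n, g n = w := fun n => by
    obtain ⟨c, hc⟩ := exists_eq_const_of_spanNorm_eq_zero (hdist n)
    have hc0 : c = 0 := by rw [← hc zbar, hnorm n, hwz, sub_zero]
    funext x
    linarith [hc x]
  have hlam : ∀ n, lam n = w zbar - T w zbar := fun n => by
    have := congrFun (hrec n) zbar
    rw [hgw n, hgw (n + 1)] at this
    linarith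
  exact ⟨hgw, fun n m => by rw [hlam n, hlam m]⟩

/-- Fixed-point argument of the vanishing-discount proof: a span-contractive,
shift-equivariant operator with a bounded backward-recursive normalized sequence
forces the sequence to equal the normalized fixed point and the constants to be
all equal. -/
theorem backward_sequence_is_fixed_point
    (T : (E → ℝ) → (E → ℝ)) (Λ : ℝ) (hΛ : Λ ∈ Set.Ioo (0 : ℝ) 1)
    (hcontr : ∀ g1 g2 : E → ℝ,
      spanNorm (fun x => T g1 x - T g2 x) ≤ Λ * spanNorm (fun x => g1 x - g2 x))
    (hshift : ∀ (g : E → ℝ) (c : ℝ), T (fun x => g x + c) = fun x => T g x + c)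
    (g : ℕ → E → ℝ) (lam : ℕ → ℝ)
    (hrec : ∀ n, g n = fun x => T (g (n + 1)) x + lam n)
    (hbound : ∃ B : ℝ, ∀ n, spanNorm (g n) ≤ B)
    (zbar : E) (hnorm : ∀ n, g n zbar = 0)
    (w : E → ℝ) (hw : spanNorm (fun x => T w x - w x) = 0) (hwz : w zbar = 0) :
    (∀ n, g n = w) ∧ (∀ n m, lam n = lam m) :=
  backward_sequence_is_fixed_point_general T Λ hΛ hcontr g lam hrec hbound zbar hnorm w hw hwz
end
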